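/- Let R = k{x₁,…,xₙ; Q, ⪯} be a PBW algebra over a field k, let s ≥ 1, and let M ⊆ R^s be an R-sub-bimodule. Let ≼ be any one of the four orders ⪯^c, ⪯_c, ⪯*, ⪯_* on ℕ^{2n}. Measure exponents of nonzero elements of R^s using the standard-monomial k-basis of R and the TOP (respectively POT) order built from ⪯, and exponents of nonzero elements of (R^env)^s using the standard-monomial k-basis of R^env and the TOP (respectively POT) order built from ≼. If G ⊆ (R^env)^s is a left Gröbner basis of the left R^env-module N_M := (𝔪^s)^{−1}(M), then 𝔪^s(G) ∖ {0} is a two-sided Gröbner basis of M. -/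

import Mathlib

open TensorProduct MulOpposite

set_option synthInstance.maxHeartbeats 1000000
set_option maxHeartbeats 1000000

noncomputable section

/-- An admissible order on a commutative monoid of exponents: a total order for which `0`
is smallest and which is compatible with addition. -/
def IsAdmissible {E : Type*} [AddCommMonoid E] (le : E → E → Prop) : Prop :=
  (∀ a b, le a b ∨ le b a) ∧
  (∀ a b, le a b → le b a → a = b) ∧
  (∀ a b c, le a b → le b c → le a c) ∧
  (∀ a, le 0 a) ∧
  (∀ a b c, le a b → le (a + c) (b + c))

/-- The strict part of an order. -/
def ltOf {E : Type*} (le : E → E → Prop) (a b : E) : Prop := le a b ∧ a ≠ b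

/-- `α^op`: the reversal of a multi-exponent. -/
def expRev {n : ℕ} (α : Fin n → ℕ) : Fin n → ℕ := fun i => α i.rev

/-- The order `⪯^op` on exponents: `α ⪯^op β ↔ α^op ⪯ β^op`. -/
def opOrd {n : ℕ} (le : (Fin n → ℕ) → (Fin n → ℕ) → Prop) :
    (Fin n → ℕ) → (Fin n → ℕ) → Prop := fun a b => le (expRev a) (expRev b)

/-- The up-component composition order `⪯^c` on `ℕⁿ × ℕⁿ`. -/
def upCompOrd {n : ℕ} (le : (Fin n → ℕ) → (Fin n → ℕ) → Prop) :
    ((Fin n → ℕ) × (Fin n → ℕ)) → ((Fin n → ℕ) × (Fin n → ℕ)) → Prop := fun a b =>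
  a = b ∨ ltOf le (a.1 + expRev a.2) (b.1 + expRev b.2) ∨
    (a.1 + expRev a.2 = b.1 + expRev b.2 ∧ ltOf le (expRev a.2) (expRev b.2))

/-- The down-component composition order `⪯_c` on `ℕⁿ × ℕⁿ`. -/
def downCompOrd {n : ℕ} (le : (Fin n → ℕ) → (Fin n → ℕ) → Prop) :
    ((Fin n → ℕ) × (Fin n → ℕ)) → ((Fin n → ℕ) × (Fin n → ℕ)) → Prop := fun a b =>
  a = b ∨ ltOf le (a.1 + expRev a.2) (b.1 + expRev b.2) ∨
    (a.1 + expRev a.2 = b.1 + expRev b.2 ∧ ltOf le a.1 b.1)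

/-- The elimination order `⪯*` on `ℕⁿ × ℕⁿ` built from `⪯` and `⪯^op`. -/
def elimUpOrd {n : ℕ} (le : (Fin n → ℕ) → (Fin n → ℕ) → Prop) :
    ((Fin n → ℕ) × (Fin n → ℕ)) → ((Fin n → ℕ) × (Fin n → ℕ)) → Prop := fun a b =>
  a = b ∨ ltOf le a.1 b.1 ∨ (a.1 = b.1 ∧ ltOf (opOrd le) a.2 b.2)

/-- The elimination order `⪯_*` on `ℕⁿ × ℕⁿ` built from `⪯` and `⪯^op`. -/
def elimDownOrd {n : ℕ} (le : (Fin n → ℕ) → (Fin n → ℕ) → Prop) :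
    ((Fin n → ℕ) × (Fin n → ℕ)) → ((Fin n → ℕ) × (Fin n → ℕ)) → Prop := fun a b =>
  a = b ∨ ltOf (opOrd le) a.2 b.2 ∨ (a.2 = b.2 ∧ ltOf le a.1 b.1)

/-- The strict TOP (term over position) order on `I × Fin m` built from a strict order on `I`. -/
def topLt {I : Type*} {m : ℕ} (lt : I → I → Prop) (a b : I × Fin m) : Prop :=
  lt a.1 b.1 ∨ (a.1 = b.1 ∧ b.2 < a.2)

/-- The strict POT (position over term) order on `I × Fin m` built from a strict order on `I`. -/
def potLt {I : Type*} {m : ℕ} (lt : I → I → Prop) (a b : I × Fin m) : Prop :=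
  b.2 < a.2 ∨ (a.2 = b.2 ∧ lt a.1 b.1)

/-- The standard monomial `x^α = x₁^{α₁} ⋯ xₙ^{αₙ}` (ordered product). -/
def stdMon {n : ℕ} {A : Type*} [Monoid A] (x : Fin n → A) (α : Fin n → ℕ) : A :=
  ((List.finRange n).map fun i => x i ^ α i).prod

/-- The quantum relation `xⱼxᵢ − qᵢⱼ xᵢxⱼ − pᵢⱼ` (for `i < j`) as an element of the free
algebra; here `pᵢⱼ` is recorded by its coefficients on standard monomials. -/
def quantumRel (k : Type*) [Field k] {n : ℕ} (q : Fin n → Fin n → k)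
    (p : Fin n → Fin n → ((Fin n → ℕ) →₀ k)) (i j : Fin n) : FreeAlgebra k (Fin n) :=
  FreeAlgebra.ι k j * FreeAlgebra.ι k i
    - q i j • (FreeAlgebra.ι k i * FreeAlgebra.ι k j)
    - (p i j).sum fun γ c => c • stdMon (FreeAlgebra.ι k) γ

/-- `R` is the PBW algebra `k{x₁,…,xₙ; Q, ⪯}`, where the relation for `i < j` reads
`xⱼxᵢ = qᵢⱼ xᵢxⱼ + pᵢⱼ`: the order is admissible, the `q`'s are nonzero, the tails `p` are
bounded by `⪯`, the canonical map from the free algebra is surjective with kernel the two-sided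
ideal generated by the relations, and the standard monomials form a `k`-basis. -/
def IsPBW (k : Type*) [Field k] {n : ℕ} (R : Type*) [Ring R] [Algebra k R]
    (x : Fin n → R) (q : Fin n → Fin n → k) (p : Fin n → Fin n → ((Fin n → ℕ) →₀ k))
    (le : (Fin n → ℕ) → (Fin n → ℕ) → Prop) : Prop :=
  IsAdmissible le ∧
  (∀ i j : Fin n, i < j → q i j ≠ 0) ∧
  (∀ i j : Fin n, i < j → ∀ γ ∈ (p i j).support,
      ltOf le γ (Pi.single i 1 + Pi.single j 1)) ∧
  Function.Surjective (FreeAlgebra.lift k x) ∧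
  (∀ a : FreeAlgebra k (Fin n),
      FreeAlgebra.lift k x a = 0 ↔
        a ∈ TwoSidedIdeal.span {y | ∃ i j : Fin n, i < j ∧ y = quantumRel k q p i j}) ∧
  LinearIndependent k (stdMon x) ∧
  Submodule.span k (Set.range (stdMon x)) = ⊤

section Env

variable {k R : Type*} [Field k] [Ring R] [Algebra k R]

/-- The left `R^env = R ⊗[k] Rᵐᵒᵖ`-module structure on `R`, given by
`(r ⊗ r') • f = r * f * r'`. -/
noncomputable instance (priority := 100) envModule : Module (R ⊗[k] Rᵐᵒᵖ) R :=
  TensorProduct.Algebra.module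

/-- The multiplication map `𝔪 : R^env → R`, `r ⊗ r' ↦ r r'`, as a morphism of left
`R^env`-modules. -/
noncomputable def mulE (k R : Type*) [Field k] [Ring R] [Algebra k R] :
    (R ⊗[k] Rᵐᵒᵖ) →ₗ[R ⊗[k] Rᵐᵒᵖ] R :=
  LinearMap.toSpanSingleton _ _ (1 : R)

/-- The map `𝔪^s : (R^env)^s → R^s` applying `𝔪` coordinatewise, as a morphism of left
`R^env`-modules. -/
noncomputable def mulS (k R : Type*) [Field k] [Ring R] [Algebra k R] (s : ℕ) :
    (Fin s → R ⊗[k] Rᵐᵒᵖ) →ₗ[R ⊗[k] Rᵐᵒᵖ] (Fin s → R) :=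
  LinearMap.pi fun i => (mulE k R).comp (LinearMap.proj i)

/-- `f ⊗ 1 := (f₁ ⊗ 1, …, f_s ⊗ 1)`. -/
def tensorOne (k : Type*) [Field k] {R : Type*} [Ring R] [Algebra k R] {s : ℕ}
    (f : Fin s → R) : Fin s → R ⊗[k] Rᵐᵒᵖ := fun i => f i ⊗ₜ[k] (1 : Rᵐᵒᵖ)

/-- `1 ⊗ f := (1 ⊗ f₁, …, 1 ⊗ f_s)`. -/
def oneTensor (k : Type*) [Field k] {R : Type*} [Ring R] [Algebra k R] {s : ℕ}
    (f : Fin s → R) : Fin s → R ⊗[k] Rᵐᵒᵖ := fun i => (1 : R) ⊗ₜ[k] op (f i)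

/-- The map `(h₁,…,h_m) ↦ Σᵢ hᵢ • wᵢ`, whose kernel is the (two-sided/left) syzygy module
of the family `w`. -/
noncomputable def syzMap (A : Type*) [Ring A] {M : Type*} [AddCommGroup M] [Module A M]
    {ι : Type*} [Fintype ι] (w : ι → M) : (ι → A) →ₗ[A] M where
  toFun h := ∑ l, h l • w l
  map_add' h h' := by simp [add_smul, Finset.sum_add_distrib]
  map_smul' a h := by simp [mul_smul, Finset.smul_sum]

end Env

/-- `e` is the exponent (leading index) of the nonzero element `h` of a free module of rank `m`
over an algebra with a standard-monomial basis `b` indexed by `I`, with respect to a strict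
order `lt` on `I × Fin m`: the coordinate of `h` at `e` is nonzero and every other index with
nonzero coordinate is smaller. -/
def IsExpOf {k R0 I : Type*} [Field k] [AddCommGroup R0] [Module k R0] {m : ℕ}
    (b : Module.Basis I k R0) (lt : I × Fin m → I × Fin m → Prop)
    (h : Fin m → R0) (e : I × Fin m) : Prop :=
  b.repr (h e.2) e.1 ≠ 0 ∧ ∀ β i, b.repr (h i) β ≠ 0 → (β, i) = e ∨ lt ((β, i)) e

/-- `G` is a Gröbner basis of the `A`-submodule `N` of the free module `(Fin m → R0)`:
`G ⊆ N \ {0}`, `G` generates `N` over `A`, and the leading exponent of every nonzero element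
of `N` is a translate (by some `δ`) of the leading exponent of some element of `G`, in the
same component.  Taking `A = R^env` acting on `R0 = R^env` gives left Gröbner bases, and
taking `A = R^env` acting on `R0 = R` gives two-sided Gröbner bases. -/
def IsGB {k R0 A I : Type*} [Field k] [AddCommGroup R0] [Module k R0] [Ring A] [Add I]
    {m : ℕ} [Module A (Fin m → R0)]
    (b : Module.Basis I k R0) (lt : I × Fin m → I × Fin m → Prop)
    (N : Submodule A (Fin m → R0)) (G : Set (Fin m → R0)) : Prop :=
  G ⊆ (N : Set (Fin m → R0)) \ {0} ∧ Submodule.span A G = N ∧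
  ∀ h, h ∈ N → h ≠ 0 →
    ∃ g ∈ G, ∃ γ δ i, IsExpOf b lt g (γ, i) ∧ IsExpOf b lt h (γ + δ, i)

end

section OrderBasics

variable {n : ℕ} {le : (Fin n → ℕ) → (Fin n → ℕ) → Prop}

theorem adm_refl (h : IsAdmissible le) (a : Fin n → ℕ) : le a a := (h.1 a a).elim id id

theorem adm_antisymm (h : IsAdmissible le) {a b : Fin n → ℕ} (hab : le a b) (hba : le b a) :
    a = b := h.2.1 a b hab hba

theorem adm_trans (h : IsAdmissible le) {a b c : Fin n → ℕ} (hab : le a b) (hbc : le b c) :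
    le a c := h.2.2.1 a b c hab hbc

theorem adm_zero_le (h : IsAdmissible le) (a : Fin n → ℕ) : le 0 a := h.2.2.2.1 a

theorem adm_add_right (h : IsAdmissible le) {a b : Fin n → ℕ} (c : Fin n → ℕ) (hab : le a b) :
    le (a + c) (b + c) := h.2.2.2.2 a b c hab

theorem adm_add_left (h : IsAdmissible le) {a b : Fin n → ℕ} (c : Fin n → ℕ) (hab : le a b) :
    le (c + a) (c + b) := by
  rw [add_comm c a, add_comm c b]; exact adm_add_right h c hab

theorem adm_le_add_right (h : IsAdmissible le) (a b : Fin n → ℕ) : le a (a + b) := by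
  have := adm_add_left h a (adm_zero_le h b)
  simpa using this

theorem adm_le_add_left (h : IsAdmissible le) (a b : Fin n → ℕ) : le a (b + a) := by
  rw [add_comm]; exact adm_le_add_right h a b

theorem ltOf_ne {E : Type*} {le' : E → E → Prop} {a b : E} (h : ltOf le' a b) : a ≠ b := h.2

theorem adm_lt_of_le_of_lt (h : IsAdmissible le) {a b c : Fin n → ℕ}
    (hab : le a b) (hbc : ltOf le b c) : ltOf le a c := by
  refine ⟨adm_trans h hab hbc.1, fun hac => hbc.2 ?_⟩
  subst hac; exact adm_antisymm h hbc.1 hab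

theorem adm_lt_of_lt_of_le (h : IsAdmissible le) {a b c : Fin n → ℕ}
    (hab : ltOf le a b) (hbc : le b c) : ltOf le a c := by
  refine ⟨adm_trans h hab.1 hbc, fun hac => hab.2 ?_⟩
  subst hac; exact adm_antisymm h hab.1 hbc

theorem adm_not_lt_zero (h : IsAdmissible le) (a : Fin n → ℕ) : ¬ ltOf le a 0 := by
  rintro ⟨h1, h2⟩; exact h2 (adm_antisymm h h1 (adm_zero_le h a))

theorem adm_lt_add_right (h : IsAdmissible le) {a b : Fin n → ℕ} (c : Fin n → ℕ)
    (hab : ltOf le a b) : ltOf le (a + c) (b + c) := by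
  refine ⟨adm_add_right h c hab.1, fun he => hab.2 ?_⟩
  exact add_right_cancel he

theorem adm_lt_add_left (h : IsAdmissible le) {a b : Fin n → ℕ} (c : Fin n → ℕ)
    (hab : ltOf le a b) : ltOf le (c + a) (c + b) := by
  rw [add_comm c a, add_comm c b]; exact adm_lt_add_right h c hab

/-- `a ≺ a + b` when `b ≠ 0`. -/
theorem adm_lt_add_of_ne_zero (h : IsAdmissible le) (a : Fin n → ℕ) {b : Fin n → ℕ}
    (hb : b ≠ 0) : ltOf le a (a + b) := by
  refine ⟨adm_le_add_right h a b, fun he => hb ?_⟩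
  have : a + 0 = a + b := by simpa using he
  exact (add_left_cancel this).symm

end OrderBasics

section ExpRev

variable {n : ℕ}

theorem expRev_zero : expRev (0 : Fin n → ℕ) = 0 := rfl

theorem expRev_add (a b : Fin n → ℕ) : expRev (a + b) = expRev a + expRev b := rfl

theorem expRev_rev (a : Fin n → ℕ) : expRev (expRev a) = a := by
  funext i; simp [expRev]

theorem expRev_inj : Function.Injective (expRev (n := n)) := by
  intro a b hab
  rw [← expRev_rev a, hab, expRev_rev]

end ExpRev

section WF

theorem pi_nat_isPWO (n : ℕ) : (Set.univ : Set (Fin n → ℕ)).IsPWO := by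
  have h := Set.isPWO_of_wellQuasiOrderedLE (Set.univ : Set (Fin n →₀ ℕ))
  set e : (Fin n →₀ ℕ) ≃ (Fin n → ℕ) := Finsupp.equivFunOnFinite with he
  have h2 := h.image_of_monotone (f := ⇑e) (fun a b hab => hab)
  have heq : ⇑e '' Set.univ = Set.univ := by
    rw [Set.image_univ, Set.range_eq_univ.mpr e.surjective]
  rwa [heq] at h2

variable {n : ℕ} {le : (Fin n → ℕ) → (Fin n → ℕ) → Prop}

theorem adm_wf (h : IsAdmissible le) : WellFounded (ltOf le) := by
  haveI : IsTrans (Fin n → ℕ) (ltOf le) := ⟨fun a b c hab hbc => adm_lt_of_lt_of_le h hab hbc.1⟩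
  haveI : IsIrrefl (Fin n → ℕ) (ltOf le) := ⟨fun a ha => ha.2 rfl⟩
  haveI : IsStrictOrder (Fin n → ℕ) (ltOf le) := { }
  rw [RelEmbedding.wellFounded_iff_isEmpty]
  constructor
  intro f
  have hpwo : (Set.univ : Set (Fin n → ℕ)).IsPWO := pi_nat_isPWO n
  obtain ⟨m, m', hmm', hle⟩ := hpwo (fun i => ⟨f i, Set.mem_univ _⟩)
  -- hle : f m ≤ f m' pointwise
  have h1 : ltOf le (f m') (f m) := f.map_rel_iff.2 hmm'
  have h2 : le (f m) (f m') := by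
    have hc : f m' = f m + fun i => f m' i - f m i := by
      funext i; have h3 : f m i ≤ f m' i := hle i
      simp only [Pi.add_apply]; omega
    rw [hc]; exact adm_le_add_right h _ _
  exact h1.2 (adm_antisymm h h1.1 h2)

end WF
section StdMon

variable {n : ℕ} {A : Type*} [Monoid A] (x : Fin n → A)

theorem stdMon_prod_eq_one (L : List (Fin n)) (γ : Fin n → ℕ) (h : ∀ k ∈ L, γ k = 0) :
    (L.map fun i => x i ^ γ i).prod = 1 := by
  induction L with
  | nil => simp
  | cons a L ih =>
    simp only [List.map_cons, List.prod_cons, h a (List.mem_cons_self), pow_zero, one_mul]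
    exact ih fun k hk => h k (List.mem_cons_of_mem a hk)

theorem stdMon_zero : stdMon x (0 : Fin n → ℕ) = 1 :=
  stdMon_prod_eq_one x _ _ fun _ _ => rfl

/-- Splitting the ordered range list at an element `i`. -/
theorem finRange_split (i : Fin n) :
    ∃ s t : List (Fin n), List.finRange n = s ++ i :: t ∧
      (∀ k ∈ s, k < i) ∧ (∀ k ∈ t, i < k) := by
  obtain ⟨s, t, hst⟩ := List.append_of_mem (List.mem_finRange i)
  refine ⟨s, t, hst, ?_, ?_⟩
  · have hp := List.pairwise_lt_finRange n
    rw [hst] at hp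
    have := (List.pairwise_append.mp hp).2.2
    intro k hk; exact this k hk i (List.mem_cons_self)
  · have hp := List.pairwise_lt_finRange n
    rw [hst] at hp
    have := (List.pairwise_append.mp hp).2.1
    exact (List.pairwise_cons.mp this).1

theorem stdMon_cons (i : Fin n) (β : Fin n → ℕ) (hβ : ∀ k, k < i → β k = 0) :
    stdMon x (Pi.single i 1 + β) = x i * stdMon x β := by
  obtain ⟨s, t, hst, hs, ht⟩ := finRange_split i
  unfold stdMon
  rw [hst]
  simp only [List.map_append, List.map_cons, List.prod_append, List.prod_cons]
  have hs1 : (s.map fun k => x k ^ ((Pi.single i 1 + β : Fin n → ℕ)) k).prod = 1 := by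
    apply stdMon_prod_eq_one
    intro k hk
    have hki := hs k hk
    simp [Pi.single_eq_of_ne (ne_of_lt hki), hβ k hki]
  have hs2 : (s.map fun k => x k ^ β k).prod = 1 :=
    stdMon_prod_eq_one x _ _ fun k hk => hβ k (hs k hk)
  have ht1 : (t.map fun k => x k ^ ((Pi.single i 1 + β : Fin n → ℕ)) k).prod
      = (t.map fun k => x k ^ β k).prod := by
    congr 1
    apply List.map_congr_left
    intro k hk
    have : i ≠ k := ne_of_lt (ht k hk)
    simp [Pi.single_eq_of_ne this.symm]
  have hi1 : ((Pi.single i 1 + β : Fin n → ℕ)) i = 1 + β i := by simp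
  rw [hs1, hs2, ht1, hi1, one_mul, one_mul, pow_add, pow_one, mul_assoc]

theorem stdMon_snoc (m : Fin n) (γ : Fin n → ℕ) (hγ : ∀ k, m < k → γ k = 0) :
    stdMon x (γ + Pi.single m 1) = stdMon x γ * x m := by
  obtain ⟨s, t, hst, hs, ht⟩ := finRange_split m
  unfold stdMon
  rw [hst]
  simp only [List.map_append, List.map_cons, List.prod_append, List.prod_cons]
  have hs1 : (s.map fun k => x k ^ ((γ + Pi.single m 1 : Fin n → ℕ)) k).prod
      = (s.map fun k => x k ^ γ k).prod := by
    congr 1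
    apply List.map_congr_left
    intro k hk
    have : m ≠ k := ne_of_gt (hs k hk)
    simp [Pi.single_eq_of_ne this.symm]
  have ht1 : (t.map fun k => x k ^ ((γ + Pi.single m 1 : Fin n → ℕ)) k).prod = 1 := by
    apply stdMon_prod_eq_one
    intro k hk
    have hmk := ht k hk
    simp [Pi.single_eq_of_ne (ne_of_gt hmk), hγ k hmk]
  have ht2 : (t.map fun k => x k ^ γ k).prod = 1 :=
    stdMon_prod_eq_one x _ _ fun k hk => hγ k (ht k hk)
  have hm1 : ((γ + Pi.single m 1 : Fin n → ℕ)) m = γ m + 1 := by simp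
  rw [hs1, ht1, ht2, hm1, mul_one, mul_one, pow_add, pow_one, ← mul_assoc]

theorem map_stdMon {B : Type*} [Monoid B] {F : Type*} [FunLike F A B] [MonoidHomClass F A B]
    (φ : F) (γ : Fin n → ℕ) : φ (stdMon x γ) = stdMon (fun i => φ (x i)) γ := by
  unfold stdMon
  rw [← List.prod_hom _ φ]
  congr 1
  rw [List.map_map]
  apply List.map_congr_left
  intro k _
  simp [map_pow]

end StdMon
section UB

variable {k : Type*} [Field k] {n : ℕ} {R : Type*} [Ring R] [Algebra k R]

theorem pbw_rel (x : Fin n → R) (q : Fin n → Fin n → k)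
    (p : Fin n → Fin n → ((Fin n → ℕ) →₀ k))
    {le : (Fin n → ℕ) → (Fin n → ℕ) → Prop} (hpbw : IsPBW k R x q p le)
    {j i : Fin n} (hji : j < i) :
    x i * x j = q j i • (x j * x i) + (p j i).sum fun γ c => c • stdMon x γ := by
  obtain ⟨hadm, hq, hp, hsurj, hker, hli, hsp⟩ := hpbw
  have hmem : quantumRel k q p j i ∈
      TwoSidedIdeal.span {y | ∃ i' j' : Fin n, i' < j' ∧ y = quantumRel k q p i' j'} :=
    TwoSidedIdeal.subset_span ⟨j, i, hji, rfl⟩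
  have h0 := (hker _).mpr hmem
  unfold quantumRel at h0
  rw [map_sub, map_sub, map_mul, map_smul, map_mul, map_finsuppSum] at h0
  simp only [FreeAlgebra.lift_ι_apply, map_smul, map_stdMon] at h0
  rw [sub_sub, sub_eq_zero] at h0
  exact h0

end UB

section UB2

variable {k : Type*} [Field k] {n : ℕ} {R : Type*} [Ring R] [Algebra k R]

theorem pbw_UB (x : Fin n → R) (q : Fin n → Fin n → k)
    (p : Fin n → Fin n → ((Fin n → ℕ) →₀ k))
    {le : (Fin n → ℕ) → (Fin n → ℕ) → Prop} (hpbw : IsPBW k R x q p le)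
    (bR : Module.Basis (Fin n → ℕ) k R) (hbR : ∀ α, bR α = stdMon x α) :
    ∀ α β ν, bR.repr (stdMon x α * stdMon x β) ν ≠ 0 → le ν (α + β) := by
  have hadm := hpbw.1
  have hp := hpbw.2.2.1
  set D : (Fin n → ℕ) → Submodule k R := fun μ => Submodule.span k (bR '' {ν | le ν μ})
    with hD
  have hmemD : ∀ {μ : Fin n → ℕ} {r : R},
      r ∈ D μ ↔ ∀ ν ∈ (bR.repr r).support, le ν μ := by
    intro μ r
    rw [hD]
    constructor
    · intro h ν hν; exact (Module.Basis.mem_span_image bR).mp h hν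
    · intro h; exact (Module.Basis.mem_span_image bR).mpr fun ν hν => h ν hν
  have hDmono : ∀ {μ μ' : Fin n → ℕ}, le μ μ' → D μ ≤ D μ' := fun h' =>
    Submodule.span_mono (Set.image_mono fun ν hν => adm_trans hadm hν h')
  have hbRD : ∀ {ν μ : Fin n → ℕ}, le ν μ → bR ν ∈ D μ := fun h' =>
    Submodule.subset_span ⟨_, h', rfl⟩
  have hstdD : ∀ {ν μ : Fin n → ℕ}, le ν μ → stdMon x ν ∈ D μ := fun h' =>
    (hbR _) ▸ hbRD h'
  have hmul_into : ∀ (a : R) (μ ρ : Fin n → ℕ), (∀ ν, le ν μ → a * bR ν ∈ D ρ) →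
      ∀ r ∈ D μ, a * r ∈ D ρ := by
    intro a μ ρ hbase r hr
    have h1 : a * r = (bR.repr r).sum fun ν c => c • (a * bR ν) := by
      conv_lhs => rw [← bR.linearCombination_repr r]
      rw [Finsupp.linearCombination_apply, Finsupp.mul_sum]
      exact Finsupp.sum_congr fun ν _ => mul_smul_comm _ _ _
    rw [h1]
    exact Submodule.finsuppSum_mem _ _ _ _ fun ν hν =>
      Submodule.smul_mem _ _ (hbase ν (hmemD.mp hr ν (Finsupp.mem_support_iff.mpr hν)))
  -- decomposition helper
  have hdecomp : ∀ (β : Fin n → ℕ) (j : Fin n), β j ≠ 0 →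
      β = Pi.single j 1 + Function.update β j (β j - 1) := by
    intro β j hj; funext kk
    by_cases hkk : kk = j
    · subst hkk
      simp only [Pi.add_apply, Pi.single_eq_same, Function.update_self]
      omega
    · simp [Function.update_of_ne hkk, Pi.single_eq_of_ne hkk]
  -- prodgen
  have prodgen : ∀ σ : Fin n → ℕ,
      (∀ (i : Fin n) (β : Fin n → ℕ), le (Pi.single i 1 + β) σ →
        x i * stdMon x β ∈ D (Pi.single i 1 + β)) →
      ∀ (d : ℕ) (α β : Fin n → ℕ), (∑ kk, α kk) ≤ d → le (α + β) σ →
        stdMon x α * stdMon x β ∈ D (α + β) := by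
    intro σ hgen d
    induction d with
    | zero =>
      intro α β hd hb
      have hα : α = 0 := by
        funext kk
        exact Finset.sum_eq_zero_iff.mp (Nat.le_zero.mp hd) kk (Finset.mem_univ kk)
      subst hα
      rw [stdMon_zero, one_mul, zero_add]
      exact hstdD (adm_refl hadm β)
    | succ d IH =>
      intro α β hd hb
      by_cases hα : α = 0
      · subst hα
        rw [stdMon_zero, one_mul, zero_add]
        exact hstdD (adm_refl hadm β)
      · have hTne : (Finset.univ.filter fun kk => α kk ≠ 0).Nonempty := by
          obtain ⟨kk, hkk⟩ := Function.ne_iff.mp hα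
          refine ⟨kk, ?_⟩
          simp only [Finset.mem_filter, Finset.mem_univ, true_and]
          simpa using hkk
        set m := (Finset.univ.filter fun kk => α kk ≠ 0).max' hTne with hm
        have hmne : α m ≠ 0 := by
          have := Finset.max'_mem _ hTne
          rw [← hm] at this
          exact (Finset.mem_filter.mp this).2
        set α' := Function.update α m (α m - 1) with hα'
        have hhigh : ∀ kk, m < kk → α' kk = 0 := by
          intro kk hkk
          have h0 : α kk = 0 := by
            by_contra hne
            have hmem : kk ∈ Finset.univ.filter fun kk => α kk ≠ 0 := by simp [hne]
            exact absurd (Finset.le_max' _ kk hmem) (not_le.mpr hkk)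
          rw [hα', Function.update_of_ne (ne_of_gt hkk)]
          exact h0
        have hdec : α = Pi.single m 1 + α' := hdecomp α m hmne
        have hdec' : α = α' + Pi.single m 1 := by rw [hdec]; abel
        have hsplit : stdMon x α = stdMon x α' * x m := by
          rw [hdec']; exact stdMon_snoc x m α' hhigh
        have hdeg : (∑ kk, α' kk) ≤ d := by
          have h2 : ∑ kk, α kk = ∑ kk, α' kk + 1 := by
            conv_lhs => rw [hdec']
            rw [show ∀ f g : Fin n → ℕ, (∑ kk, (f + g) kk) = ∑ kk, (f kk + g kk) from
              fun f g => rfl, Finset.sum_add_distrib]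
            simp
          omega
        have hb1 : le (Pi.single m 1 + β) σ := by
          have h4 : le (Pi.single m 1 + β) (α + β) := by
            have := adm_le_add_left hadm (Pi.single m 1 + β) α'
            have h9 : α' + (Pi.single m 1 + β) = α + β := by rw [hdec]; abel
            rwa [h9] at this
          exact adm_trans hadm h4 hb
        have hr : x m * stdMon x β ∈ D (Pi.single m 1 + β) := hgen m β hb1
        rw [hsplit, mul_assoc]
        refine hmul_into (stdMon x α') (Pi.single m 1 + β) (α + β) ?_ _ hr
        intro ν hν
        rw [hbR]
        have h5 : le (α' + ν) (α + β) := by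
          have := adm_add_left hadm α' hν
          have h9 : α' + (Pi.single m 1 + β) = α + β := by rw [hdec]; abel
          rwa [h9] at this
        have h6 : le (α' + ν) σ := adm_trans hadm h5 hb
        exact hDmono h5 (IH α' ν hdeg h6)
  -- key statement by well-founded recursion
  have key : ∀ σ : Fin n → ℕ, ∀ m : ℕ, ∀ i : Fin n, (i : ℕ) ≤ m → ∀ β,
      le (Pi.single i 1 + β) σ → x i * stdMon x β ∈ D (Pi.single i 1 + β) := by
    intro σ
    refine (adm_wf hadm).induction
      (C := fun σ => ∀ m : ℕ, ∀ i : Fin n, (i : ℕ) ≤ m → ∀ β,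
        le (Pi.single i 1 + β) σ → x i * stdMon x β ∈ D (Pi.single i 1 + β)) σ ?_
    clear σ
    intro σ IHσ m
    induction m using Nat.strong_induction_on with
    | _ m IHm =>
    intro i him β hβσ
    by_cases hex : ∃ jj, jj < i ∧ β jj ≠ 0
    · obtain ⟨jj, hjji, hjj⟩ := hex
      have hTne : (Finset.univ.filter fun kk => β kk ≠ 0).Nonempty := ⟨jj, by simp [hjj]⟩
      set j := (Finset.univ.filter fun kk => β kk ≠ 0).min' hTne with hjdef
      have hjne : β j ≠ 0 := by
        have := Finset.min'_mem _ hTne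
        rw [← hjdef] at this
        exact (Finset.mem_filter.mp this).2
      have hji : j < i :=
        lt_of_le_of_lt (Finset.min'_le _ jj (by simp [hjj])) hjji
      have hlow : ∀ kk, kk < j → β kk = 0 := by
        intro kk hkk; by_contra hne
        exact absurd (Finset.min'_le _ kk (by simp [hne])) (not_le.mpr hkk)
      set β' := Function.update β j (β j - 1) with hβ'def
      have hβdec : β = Pi.single j 1 + β' := hdecomp β j hjne
      have hlow' : ∀ kk, kk < j → β' kk = 0 := by
        intro kk hkk
        rw [hβ'def, Function.update_of_ne (ne_of_lt hkk)]
        exact hlow kk hkk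
      have hsplitβ : stdMon x β = x j * stdMon x β' := by
        rw [hβdec]; exact stdMon_cons x j β' hlow'
      have hxx : x i * x j = q j i • (x j * x i) + (p j i).sum fun γ c => c • stdMon x γ :=
        pbw_rel x q p hpbw hji
      have hmain : x i * stdMon x β
          = q j i • (x j * (x i * stdMon x β'))
            + (p j i).sum fun γ c => c • (stdMon x γ * stdMon x β') := by
        rw [hsplitβ, ← mul_assoc, hxx, add_mul, smul_mul_assoc, mul_assoc, Finsupp.sum_mul]
        congr 1
        exact Finsupp.sum_congr fun γ _ => smul_mul_assoc _ _ _
      rw [hmain]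
      apply Submodule.add_mem
      · apply Submodule.smul_mem
        have hltβ : ltOf le (Pi.single i 1 + β') (Pi.single i 1 + β) := by
          have h11 : Pi.single i 1 + β = (Pi.single i 1 + β') + Pi.single j 1 := by
            rw [hβdec]; abel
          rw [h11]
          refine adm_lt_add_of_ne_zero hadm _ ?_
          intro hz
          have : (Pi.single j 1 : Fin n → ℕ) j = 0 := by rw [hz]; rfl
          simp at this
        have hr : x i * stdMon x β' ∈ D (Pi.single i 1 + β') :=
          IHσ _ (adm_lt_of_lt_of_le hadm hltβ hβσ) (i : ℕ) i (le_refl _) β' (adm_refl hadm _)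
        refine hmul_into (x j) (Pi.single i 1 + β') (Pi.single i 1 + β) ?_ _ hr
        intro ν hν
        rw [hbR]
        have h8 := adm_add_left hadm (Pi.single j 1) hν
        have h9 : Pi.single j 1 + (Pi.single i 1 + β') = Pi.single i 1 + β := by
          rw [hβdec]; abel
        rw [h9] at h8
        have h7 : le (Pi.single j 1 + ν) σ := adm_trans hadm h8 hβσ
        have h10 : x j * stdMon x ν ∈ D (Pi.single j 1 + ν) :=
          IHm (j : ℕ) (lt_of_lt_of_le (by exact_mod_cast hji) him) j (le_refl _) ν h7
        exact hDmono h8 h10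
      · refine Submodule.finsuppSum_mem _ _ _ _ ?_
        intro γ hγ
        refine Submodule.smul_mem _ _ ?_
        have hγlt : ltOf le γ (Pi.single j 1 + Pi.single i 1) :=
          hp j i hji γ (Finsupp.mem_support_iff.mpr hγ)
        have hlt2 : ltOf le (γ + β') (Pi.single i 1 + β) := by
          have h12 := adm_lt_add_right hadm β' hγlt
          have h9 : Pi.single j 1 + Pi.single i 1 + β' = Pi.single i 1 + β := by
            rw [hβdec]; abel
          rwa [h9] at h12
        have hσ2 : ltOf le (γ + β') σ := adm_lt_of_lt_of_le hadm hlt2 hβσ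
        have hgen2 : ∀ (i' : Fin n) (β'' : Fin n → ℕ), le (Pi.single i' 1 + β'') (γ + β') →
            x i' * stdMon x β'' ∈ D (Pi.single i' 1 + β'') :=
          fun i' β'' hb => IHσ _ hσ2 (i' : ℕ) i' (le_refl _) β'' hb
        have h13 := prodgen (γ + β') hgen2 (∑ kk, γ kk) γ β' (le_refl _) (adm_refl hadm _)
        exact hDmono hlt2.1 h13
    · push_neg at hex
      rw [← stdMon_cons x i β hex]
      exact hstdD (adm_refl hadm _)
  intro α β ν hν
  have h1 : stdMon x α * stdMon x β ∈ D (α + β) :=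
    prodgen (α + β) (fun i' β'' hb => key (α + β) n i' (Nat.le_of_lt i'.isLt) β'' hb)
      (∑ kk, α kk) α β (le_refl _) (adm_refl hadm _)
  exact hmemD.mp h1 ν (Finsupp.mem_support_iff.mpr hν)

end UB2
section EnvLemmas

variable {k R : Type*} [Field k] [Ring R] [Algebra k R]

theorem mulE_tmul (a : R) (b : Rᵐᵒᵖ) : mulE k R (a ⊗ₜ[k] b) = a * b.unop := by
  show (a ⊗ₜ[k] b) • (1 : R) = a * b.unop
  rw [TensorProduct.Algebra.smul_def, MulOpposite.smul_eq_mul_unop, smul_eq_mul, one_mul]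

theorem mulE_ksmul (c : k) (z : R ⊗[k] Rᵐᵒᵖ) : mulE k R (c • z) = c • mulE k R z := by
  induction z using TensorProduct.induction_on with
  | zero => simp
  | tmul a b => rw [TensorProduct.smul_tmul', mulE_tmul, mulE_tmul, smul_mul_assoc]
  | add z w hz hw => rw [smul_add, map_add, map_add, smul_add, hz, hw]

theorem mulS_apply (s : ℕ) (h : Fin s → R ⊗[k] Rᵐᵒᵖ) (j : Fin s) :
    mulS k R s h j = mulE k R (h j) := rfl

theorem repr_emb {n : ℕ} (bR : Module.Basis (Fin n → ℕ) k R)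
    (bE : Module.Basis ((Fin n → ℕ) × (Fin n → ℕ)) k (R ⊗[k] Rᵐᵒᵖ))
    (ι₀ : (Fin n → ℕ) → (Fin n → ℕ) × (Fin n → ℕ)) (E : R →ₗ[k] R ⊗[k] Rᵐᵒᵖ)
    (hEb : ∀ ν, E (bR ν) = bE (ι₀ ν)) (r : R) :
    bE.repr (E r) = Finsupp.mapDomain ι₀ (bR.repr r) := by
  have h : (bE.repr.toLinearMap.comp E)
      = (Finsupp.lmapDomain k k ι₀).comp bR.repr.toLinearMap := by
    apply bR.ext
    intro ν
    simp only [LinearMap.coe_comp, Function.comp_apply, LinearEquiv.coe_coe, hEb,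
      Module.Basis.repr_self, Finsupp.lmapDomain_apply, Finsupp.mapDomain_single]
  exact LinearMap.congr_fun h r

end EnvLemmas
section MainStep

variable {k R : Type*} [Field k] [Ring R] [Algebra k R]

theorem topLt_def {I : Type*} {m : ℕ} (lt : I → I → Prop) (a b : I × Fin m) :
    topLt lt a b ↔ (lt a.1 b.1 ∨ (a.1 = b.1 ∧ b.2 < a.2)) := Iff.rfl

theorem potLt_def {I : Type*} {m : ℕ} (lt : I → I → Prop) (a b : I × Fin m) :
    potLt lt a b ↔ (b.2 < a.2 ∨ (a.2 = b.2 ∧ lt a.1 b.1)) := Iff.rfl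

theorem main_step {n s : ℕ} (x : Fin n → R)
    {le : (Fin n → ℕ) → (Fin n → ℕ) → Prop} (hadm : IsAdmissible le)
    (bR : Module.Basis (Fin n → ℕ) k R)
    (bE : Module.Basis ((Fin n → ℕ) × (Fin n → ℕ)) k (R ⊗[k] Rᵐᵒᵖ))
    (hbE : ∀ αβ : (Fin n → ℕ) × (Fin n → ℕ),
      bE αβ = stdMon x αβ.1 ⊗ₜ[k] op (stdMon x (expRev αβ.2)))
    (hUB : ∀ α β ν, bR.repr (stdMon x α * stdMon x β) ν ≠ 0 → le ν (α + β))
    (le2 : ((Fin n → ℕ) × (Fin n → ℕ)) → ((Fin n → ℕ) × (Fin n → ℕ)) → Prop)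
    (ι₀ : (Fin n → ℕ) → (Fin n → ℕ) × (Fin n → ℕ))
    (hι_inj : Function.Injective ι₀)
    (hι_sum : ∀ a b μ, a + b = ι₀ μ → ∃ νa νb, a = ι₀ νa ∧ b = ι₀ νb ∧ νa + νb = μ)
    (hπι : ∀ ν, (ι₀ ν).1 + expRev (ι₀ ν).2 = ν)
    (hmul_top : ∀ ν, mulE k R (bE (ι₀ ν)) = bR ν)
    (E : R →ₗ[k] R ⊗[k] Rᵐᵒᵖ)
    (hE1 : ∀ r, mulE k R (E r) = r)
    (hEb : ∀ ν, E (bR ν) = bE (ι₀ ν))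
    (hP3 : ∀ a γ₀, ltOf le2 a (ι₀ γ₀) → ltOf le (a.1 + expRev a.2) γ₀)
    (ordR : ((Fin n → ℕ) × Fin s) → ((Fin n → ℕ) × Fin s) → Prop)
    (ordE : (((Fin n → ℕ) × (Fin n → ℕ)) × Fin s) →
      (((Fin n → ℕ) × (Fin n → ℕ)) × Fin s) → Prop)
    (hord : (ordR = topLt (ltOf le) ∧ ordE = topLt (ltOf le2)) ∨
      (ordR = potLt (ltOf le) ∧ ordE = potLt (ltOf le2)))
    (M : Submodule (R ⊗[k] Rᵐᵒᵖ) (Fin s → R))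
    (G : Set (Fin s → R ⊗[k] Rᵐᵒᵖ))
    (hG : IsGB bE ordE (Submodule.comap (mulS k R s) M) G) :
    IsGB bR ordR M ((mulS k R s '' G) \ {0}) := by
  classical
  obtain ⟨hGsub, hGspan, hGdiv⟩ := hG
  have hexpand : ∀ (g : Fin s → R ⊗[k] Rᵐᵒᵖ) (j' : Fin s) (ν : Fin n → ℕ),
      bR.repr (mulS k R s g j') ν
        = ∑ a ∈ (bE.repr (g j')).support,
            bE.repr (g j') a * bR.repr (mulE k R (bE a)) ν := by
    intro g j' ν
    have h1 : g j' = (bE.repr (g j')).sum fun a c => c • bE a := by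
      conv_lhs => rw [← bE.linearCombination_repr (g j')]
      rw [Finsupp.linearCombination_apply]
    rw [mulS_apply]
    conv_lhs => rw [h1]
    simp only [Finsupp.sum, map_sum, mulE_ksmul, map_smul, Finset.sum_apply',
      Finsupp.smul_apply, smul_eq_mul]
  have hprod : ∀ a : (Fin n → ℕ) × (Fin n → ℕ),
      mulE k R (bE a) = stdMon x a.1 * stdMon x (expRev a.2) := by
    intro a; rw [hbE, mulE_tmul, unop_op]
  have hUB' : ∀ a ν, bR.repr (mulE k R (bE a)) ν ≠ 0 → le ν (a.1 + expRev a.2) := by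
    intro a ν hco; rw [hprod] at hco; exact hUB _ _ _ hco
  refine ⟨?_, ?_, ?_⟩
  · rintro f ⟨⟨g, hgG, rfl⟩, hf0⟩
    exact ⟨(hGsub hgG).1, hf0⟩
  · have hspan0 : Submodule.span (R ⊗[k] Rᵐᵒᵖ) ((mulS k R s '' G) \ {0})
        = Submodule.span (R ⊗[k] Rᵐᵒᵖ) (mulS k R s '' G) := by
      apply le_antisymm (Submodule.span_mono Set.diff_subset)
      rw [Submodule.span_le]
      intro y hy
      by_cases hy0 : y = 0
      · subst hy0; exact Submodule.zero_mem _
      · exact Submodule.subset_span ⟨hy, hy0⟩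
    rw [hspan0, ← Submodule.map_span, hGspan]
    apply le_antisymm (Submodule.map_comap_le _ _)
    intro m hm
    rw [Submodule.mem_map]
    refine ⟨fun j => E (m j), ?_, ?_⟩
    · show mulS k R s (fun j => E (m j)) ∈ M
      have heq : mulS k R s (fun j => E (m j)) = m := by
        funext j; rw [mulS_apply]; exact hE1 (m j)
      rwa [heq]
    · funext j; rw [mulS_apply]; exact hE1 (m j)
  · intro f hfM hf0
    set h : Fin s → R ⊗[k] Rᵐᵒᵖ := fun j => E (f j) with hh
    have hrepr : ∀ j, bE.repr (h j) = Finsupp.mapDomain ι₀ (bR.repr (f j)) :=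
      fun j => repr_emb bR bE ι₀ E hEb (f j)
    have hco1 : ∀ j ν, bE.repr (h j) (ι₀ ν) = bR.repr (f j) ν := by
      intro j ν; rw [hrepr j, Finsupp.mapDomain_apply hι_inj]
    have hco2 : ∀ j a, bE.repr (h j) a ≠ 0 → ∃ ν, a = ι₀ ν ∧ bR.repr (f j) ν ≠ 0 := by
      intro j a ha
      rw [hrepr j] at ha
      obtain ⟨ν, hν, hνa⟩ :=
        Finset.mem_image.mp (Finsupp.mapDomain_support (Finsupp.mem_support_iff.mpr ha))
      exact ⟨ν, hνa.symm, Finsupp.mem_support_iff.mp hν⟩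
    have hhN : h ∈ Submodule.comap (mulS k R s) M := by
      show mulS k R s h ∈ M
      have heq : mulS k R s h = f := by
        funext j; rw [mulS_apply]; exact hE1 (f j)
      rwa [heq]
    have hh0 : h ≠ 0 := by
      obtain ⟨j, hj⟩ := Function.ne_iff.mp hf0
      have hj' : f j ≠ 0 := by simpa using hj
      have hrne : bR.repr (f j) ≠ 0 := fun hz => hj' (bR.repr.map_eq_zero_iff.mp hz)
      obtain ⟨ν, hν⟩ := Finsupp.ne_iff.mp hrne
      intro hz
      have h2 : bE.repr (h j) (ι₀ ν) ≠ 0 := by rw [hco1]; simpa using hν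
      rw [hz] at h2
      simp at h2
    obtain ⟨g, hgG, γ₂, δ₂, j, hgexp, hhexp⟩ := hGdiv h hhN hh0
    have hhtop : bE.repr (h j) (γ₂ + δ₂) ≠ 0 := hhexp.1
    obtain ⟨μ₀, hμ₀, hfμ₀⟩ := hco2 j (γ₂ + δ₂) hhtop
    obtain ⟨γ₀, δ₀, hγ₂, hδ₂, hsum⟩ := hι_sum γ₂ δ₂ μ₀ hμ₀
    have hkey : ∀ ν' μ' (ja jb : Fin s), ordE ((ι₀ ν', ja)) ((ι₀ μ', jb)) →
        ordR ((ν', ja)) ((μ', jb)) := by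
      intro ν' μ' ja jb hE'
      rcases hord with ⟨hR, hEy⟩ | ⟨hR, hEy⟩
      · subst hR; subst hEy
        have hE'' : ltOf le2 (ι₀ ν') (ι₀ μ') ∨ (ι₀ ν' = ι₀ μ' ∧ jb < ja) := hE'
        rcases hE'' with hlt2 | ⟨heq2, hj⟩
        · left
          have h17 := hP3 _ _ hlt2
          rwa [hπι] at h17
        · exact Or.inr ⟨hι_inj heq2, hj⟩
      · subst hR; subst hEy
        have hE'' : jb < ja ∨ (ja = jb ∧ ltOf le2 (ι₀ ν') (ι₀ μ')) := hE'
        rcases hE'' with hj | ⟨hje, hlt2⟩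
        · exact Or.inl hj
        · refine Or.inr ⟨hje, ?_⟩
          have h17 := hP3 _ _ hlt2
          rwa [hπι] at h17
    have hfexp : IsExpOf bR ordR f (μ₀, j) := by
      refine ⟨hfμ₀, ?_⟩
      intro ν j' hν
      have hhν : bE.repr (h j') (ι₀ ν) ≠ 0 := by rw [hco1]; exact hν
      rcases hhexp.2 (ι₀ ν) j' hhν with heq | hlt
      · left
        rw [Prod.mk.injEq] at heq
        have hνμ : ν = μ₀ := hι_inj (by rw [heq.1, hμ₀])
        rw [Prod.mk.injEq]
        exact ⟨hνμ, heq.2⟩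
      · right
        rw [hμ₀] at hlt
        exact hkey ν μ₀ j' j hlt
    rw [hγ₂] at hgexp
    have hgtop : bE.repr (g j) (ι₀ γ₀) ≠ 0 := hgexp.1
    -- coefficient of mulS g at (γ₀, j)
    have htopco : bR.repr (mulS k R s g j) γ₀ = bE.repr (g j) (ι₀ γ₀) := by
      rw [hexpand]
      rw [Finset.sum_eq_single_of_mem (ι₀ γ₀) (Finsupp.mem_support_iff.mpr hgtop)]
      · rw [hmul_top, Module.Basis.repr_self, Finsupp.single_eq_same, mul_one]
      · intro a ha hane
        have hag : bE.repr (g j) a ≠ 0 := Finsupp.mem_support_iff.mp ha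
        have hlt2 : ltOf le2 a (ι₀ γ₀) := by
          rcases hgexp.2 a j hag with heq | hlt
          · exact absurd (congrArg Prod.fst heq) hane
          · rcases hord with ⟨hR, hEy⟩ | ⟨hR, hEy⟩
            · subst hEy
              have hE'' : ltOf le2 a (ι₀ γ₀) ∨ (a = ι₀ γ₀ ∧ j < j) := hlt
              rcases hE'' with h' | ⟨he, _⟩
              · exact h'
              · exact absurd he hane
            · subst hEy
              have hE'' : j < j ∨ (j = j ∧ ltOf le2 a (ι₀ γ₀)) := hlt
              rcases hE'' with h' | ⟨_, h''⟩
              · exact absurd h' (lt_irrefl j)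
              · exact h''
        have h14 : bR.repr (mulE k R (bE a)) γ₀ = 0 := by
          by_contra h15
          have h16 := hUB' a γ₀ h15
          have h17 := hP3 a γ₀ hlt2
          exact h17.2 (adm_antisymm hadm h17.1 h16)
        rw [h14, mul_zero]
    have hg0 : mulS k R s g ≠ 0 := by
      intro hz
      have hne : bR.repr (mulS k R s g j) γ₀ ≠ 0 := by rw [htopco]; exact hgtop
      rw [hz] at hne
      simp at hne
    have hgexp' : IsExpOf bR ordR (mulS k R s g) (γ₀, j) := by
      refine ⟨?_, ?_⟩
      · show bR.repr (mulS k R s g j) γ₀ ≠ 0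
        rw [htopco]; exact hgtop
      · intro ν j' hν
        rw [hexpand] at hν
        obtain ⟨a, haS, hterm⟩ := Finset.exists_ne_zero_of_sum_ne_zero hν
        have hag : bE.repr (g j') a ≠ 0 := Finsupp.mem_support_iff.mp haS
        have hco : bR.repr (mulE k R (bE a)) ν ≠ 0 := by
          intro hz; rw [hz, mul_zero] at hterm; exact hterm rfl
        rcases hgexp.2 a j' hag with heq | hlt
        · rw [Prod.mk.injEq] at heq
          obtain ⟨ha', hj'⟩ := heq
          rw [ha', hmul_top, Module.Basis.repr_self] at hco
          have hνγ : ν = γ₀ := by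
            by_contra hne
            rw [Finsupp.single_eq_of_ne hne] at hco
            exact hco rfl
          left
          rw [Prod.mk.injEq]
          exact ⟨hνγ, hj'⟩
        · right
          rcases hord with ⟨hR, hEy⟩ | ⟨hR, hEy⟩
          · subst hR; subst hEy
            have hE'' : ltOf le2 a (ι₀ γ₀) ∨ (a = ι₀ γ₀ ∧ j < j') := hlt
            rcases hE'' with hlt2 | ⟨heq2, hj⟩
            · left
              have h17 := hP3 a γ₀ hlt2
              have h16 := hUB' a ν hco
              exact adm_lt_of_le_of_lt hadm h16 h17
            · rw [heq2, hmul_top, Module.Basis.repr_self] at hco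
              have hνγ : ν = γ₀ := by
                by_contra hne
                rw [Finsupp.single_eq_of_ne hne] at hco
                exact hco rfl
              exact Or.inr ⟨hνγ, hj⟩
          · subst hR; subst hEy
            have hE'' : j < j' ∨ (j' = j ∧ ltOf le2 a (ι₀ γ₀)) := hlt
            rcases hE'' with hj | ⟨hje, hlt2⟩
            · exact Or.inl hj
            · refine Or.inr ⟨hje, ?_⟩
              have h17 := hP3 a γ₀ hlt2
              have h16 := hUB' a ν hco
              exact adm_lt_of_le_of_lt hadm h16 h17
    refine ⟨mulS k R s g, ⟨⟨g, hgG, rfl⟩, hg0⟩, γ₀, δ₀, j, hgexp', ?_⟩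
    rw [hsum]
    exact hfexp

end MainStep
section P3

variable {n : ℕ} {le : (Fin n → ℕ) → (Fin n → ℕ) → Prop}

theorem P3_upComp (hadm : IsAdmissible le) :
    ∀ (a : (Fin n → ℕ) × (Fin n → ℕ)) (γ₀ : Fin n → ℕ),
      ltOf (upCompOrd le) a ((γ₀, (0 : Fin n → ℕ))) → ltOf le (a.1 + expRev a.2) γ₀ := by
  rintro a γ₀ ⟨h1, hne⟩
  rcases h1 with heq | hlt | ⟨heqs, hlt⟩
  · exact absurd heq hne
  · simpa [expRev_zero] using hlt
  · exact absurd (by simpa [expRev_zero] using hlt) (adm_not_lt_zero hadm _)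

theorem P3_elimDown (hadm : IsAdmissible le) :
    ∀ (a : (Fin n → ℕ) × (Fin n → ℕ)) (γ₀ : Fin n → ℕ),
      ltOf (elimDownOrd le) a ((γ₀, (0 : Fin n → ℕ))) → ltOf le (a.1 + expRev a.2) γ₀ := by
  rintro a γ₀ ⟨h1, hne⟩
  rcases h1 with heq | hlt | ⟨heq2, hlt⟩
  · exact absurd heq hne
  · obtain ⟨hle', hne'⟩ := hlt
    have h3 : expRev a.2 = 0 := by
      have hle'' : le (expRev a.2) (expRev (0 : Fin n → ℕ)) := hle'
      rw [expRev_zero] at hle''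
      exact adm_antisymm hadm hle'' (adm_zero_le hadm _)
    have h4 : a.2 = 0 := by
      have := congrArg expRev h3
      rwa [expRev_rev, expRev_zero] at this
    exact absurd h4 hne'
  · have h5 : a.2 = (0 : Fin n → ℕ) := heq2
    rw [h5, expRev_zero, add_zero]
    exact hlt

theorem P3_downComp (hadm : IsAdmissible le) :
    ∀ (a : (Fin n → ℕ) × (Fin n → ℕ)) (γ₀ : Fin n → ℕ),
      ltOf (downCompOrd le) a (((0 : Fin n → ℕ), expRev γ₀)) → ltOf le (a.1 + expRev a.2) γ₀ := by
  rintro a γ₀ ⟨h1, hne⟩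
  rcases h1 with heq | hlt | ⟨heqs, hlt⟩
  · exact absurd heq hne
  · simpa [expRev_rev] using hlt
  · exact absurd hlt (adm_not_lt_zero hadm _)

theorem P3_elimUp (hadm : IsAdmissible le) :
    ∀ (a : (Fin n → ℕ) × (Fin n → ℕ)) (γ₀ : Fin n → ℕ),
      ltOf (elimUpOrd le) a (((0 : Fin n → ℕ), expRev γ₀)) → ltOf le (a.1 + expRev a.2) γ₀ := by
  rintro a γ₀ ⟨h1, hne⟩
  rcases h1 with heq | hlt | ⟨heq1, hlt⟩
  · exact absurd heq hne
  · exact absurd hlt (adm_not_lt_zero hadm _)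
  · obtain ⟨hle', hne'⟩ := hlt
    have h5 : a.1 = (0 : Fin n → ℕ) := heq1
    refine ⟨?_, ?_⟩
    · rw [h5, zero_add]
      have hle'' : le (expRev a.2) (expRev (expRev γ₀)) := hle'
      rwa [expRev_rev] at hle''
    · intro hz
      rw [h5, zero_add] at hz
      apply hne'
      have := congrArg expRev hz
      rwa [expRev_rev] at this

end P3

/-- Let `R = k{x₁,…,xₙ; Q, ⪯}` be a PBW algebra, `s ≥ 1`, `M ⊆ R^s` an
`R`-sub-bimodule (left `R^env`-submodule), and let `≼` (`le2`) be any of the four orders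
`⪯^c`, `⪯_c`, `⪯*`, `⪯_*` on `ℕ^{2n}`.  Exponents in `R^s` are measured via the
standard-monomial basis `bR` of `R` and the TOP (resp. POT) order built from `⪯`, and
exponents in `(R^env)^s` via the standard-monomial basis `bE` of `R^env` (the monomial of
exponent `(α,β)` being `x^α ⊗ x^{β^op}`) and the TOP (resp. POT) order built from `≼`.
If `G` is a left Gröbner basis of `N_M = (𝔪^s)⁻¹(M)`, then `𝔪^s(G) \ {0}` is a two-sided
Gröbner basis of `M`. -/
theorem twoSided_groebner_of_left_groebner
    {k R : Type*} [Field k] [Ring R] [Algebra k R] {n s : ℕ} (hs : 1 ≤ s)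
    (x : Fin n → R) (q : Fin n → Fin n → k) (p : Fin n → Fin n → ((Fin n → ℕ) →₀ k))
    (le : (Fin n → ℕ) → (Fin n → ℕ) → Prop) (hpbw : IsPBW k R x q p le)
    (bR : Module.Basis (Fin n → ℕ) k R) (hbR : ∀ α, bR α = stdMon x α)
    (bE : Module.Basis ((Fin n → ℕ) × (Fin n → ℕ)) k (R ⊗[k] Rᵐᵒᵖ))
    (hbE : ∀ αβ : (Fin n → ℕ) × (Fin n → ℕ),
      bE αβ = stdMon x αβ.1 ⊗ₜ[k] op (stdMon x (expRev αβ.2)))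
    (le2 : ((Fin n → ℕ) × (Fin n → ℕ)) → ((Fin n → ℕ) × (Fin n → ℕ)) → Prop)
    (hle2 : le2 = upCompOrd le ∨ le2 = downCompOrd le ∨
      le2 = elimUpOrd le ∨ le2 = elimDownOrd le)
    (ordR : ((Fin n → ℕ) × Fin s) → ((Fin n → ℕ) × Fin s) → Prop)
    (ordE : (((Fin n → ℕ) × (Fin n → ℕ)) × Fin s) →
      (((Fin n → ℕ) × (Fin n → ℕ)) × Fin s) → Prop)
    (hord : (ordR = topLt (ltOf le) ∧ ordE = topLt (ltOf le2)) ∨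
      (ordR = potLt (ltOf le) ∧ ordE = potLt (ltOf le2)))
    (M : Submodule (R ⊗[k] Rᵐᵒᵖ) (Fin s → R))
    (G : Set (Fin s → R ⊗[k] Rᵐᵒᵖ))
    (hG : IsGB bE ordE (Submodule.comap (mulS k R s) M) G) :
    IsGB bR ordR M ((mulS k R s '' G) \ {0}) := by
  have hadm := hpbw.1
  have hUB := pbw_UB x q p hpbw bR hbR
  -- data for the `f ⊗ 1` embedding
  set E₁ : R →ₗ[k] R ⊗[k] Rᵐᵒᵖ := (TensorProduct.mk k R Rᵐᵒᵖ).flip 1 with hE₁def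
  have hE₁app : ∀ r : R, E₁ r = r ⊗ₜ[k] (1 : Rᵐᵒᵖ) := fun r => rfl
  set ι₁ : (Fin n → ℕ) → (Fin n → ℕ) × (Fin n → ℕ) := fun ν => (ν, 0) with hι₁def
  have hι₁inj : Function.Injective ι₁ := fun a b hab => congrArg Prod.fst hab
  have hι₁sum : ∀ a b μ, a + b = ι₁ μ → ∃ νa νb, a = ι₁ νa ∧ b = ι₁ νb ∧ νa + νb = μ := by
    intro a b μ hab
    have h1 : a.1 + b.1 = μ := congrArg Prod.fst hab
    have h2 : a.2 + b.2 = 0 := congrArg Prod.snd hab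
    have ha2 : a.2 = 0 := by
      funext i
      have h3 := congrFun h2 i
      simp only [Pi.add_apply, Pi.zero_apply] at h3 ⊢
      omega
    have hb2 : b.2 = 0 := by
      funext i
      have h3 := congrFun h2 i
      simp only [Pi.add_apply, Pi.zero_apply] at h3 ⊢
      omega
    refine ⟨a.1, b.1, ?_, ?_, h1⟩
    · show a = (a.1, 0)
      rw [← ha2]
    · show b = (b.1, 0)
      rw [← hb2]
  have hπι₁ : ∀ ν, (ι₁ ν).1 + expRev (ι₁ ν).2 = ν := by
    intro ν
    show ν + expRev 0 = ν
    rw [expRev_zero, add_zero]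
  have hmt₁ : ∀ ν, mulE k R (bE (ι₁ ν)) = bR ν := by
    intro ν
    rw [hbE, mulE_tmul, unop_op]
    show stdMon x ν * stdMon x (expRev 0) = bR ν
    rw [expRev_zero, stdMon_zero, mul_one, hbR]
  have hE₁1 : ∀ r, mulE k R (E₁ r) = r := by
    intro r
    rw [hE₁app, mulE_tmul, unop_one, mul_one]
  have hE₁b : ∀ ν, E₁ (bR ν) = bE (ι₁ ν) := by
    intro ν
    rw [hE₁app, hbE, hbR]
    show stdMon x ν ⊗ₜ[k] (1 : Rᵐᵒᵖ)
      = stdMon x ν ⊗ₜ[k] op (stdMon x (expRev (0 : Fin n → ℕ)))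
    rw [expRev_zero, stdMon_zero, op_one]
  -- data for the `1 ⊗ f` embedding
  set E₂ : R →ₗ[k] R ⊗[k] Rᵐᵒᵖ :=
    (TensorProduct.mk k R Rᵐᵒᵖ 1).comp (MulOpposite.opLinearEquiv k).toLinearMap with hE₂def
  have hE₂app : ∀ r : R, E₂ r = (1 : R) ⊗ₜ[k] op r := fun r => rfl
  set ι₂ : (Fin n → ℕ) → (Fin n → ℕ) × (Fin n → ℕ) := fun ν => (0, expRev ν) with hι₂def
  have hι₂inj : Function.Injective ι₂ := fun a b hab => expRev_inj (congrArg Prod.snd hab)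
  have hι₂sum : ∀ a b μ, a + b = ι₂ μ → ∃ νa νb, a = ι₂ νa ∧ b = ι₂ νb ∧ νa + νb = μ := by
    intro a b μ hab
    have h1 : a.1 + b.1 = 0 := congrArg Prod.fst hab
    have h2 : a.2 + b.2 = expRev μ := congrArg Prod.snd hab
    have ha1 : a.1 = 0 := by
      funext i
      have h3 := congrFun h1 i
      simp only [Pi.add_apply, Pi.zero_apply] at h3 ⊢
      omega
    have hb1 : b.1 = 0 := by
      funext i
      have h3 := congrFun h1 i
      simp only [Pi.add_apply, Pi.zero_apply] at h3 ⊢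
      omega
    refine ⟨expRev a.2, expRev b.2, ?_, ?_, ?_⟩
    · show a = (0, expRev (expRev a.2))
      rw [expRev_rev, ← ha1]
    · show b = (0, expRev (expRev b.2))
      rw [expRev_rev, ← hb1]
    · rw [← expRev_add, h2, expRev_rev]
  have hπι₂ : ∀ ν, (ι₂ ν).1 + expRev (ι₂ ν).2 = ν := by
    intro ν
    show 0 + expRev (expRev ν) = ν
    rw [expRev_rev, zero_add]
  have hmt₂ : ∀ ν, mulE k R (bE (ι₂ ν)) = bR ν := by
    intro ν
    rw [hbE, mulE_tmul, unop_op]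
    show stdMon x (0 : Fin n → ℕ) * stdMon x (expRev (expRev ν)) = bR ν
    rw [stdMon_zero, one_mul, expRev_rev, hbR]
  have hE₂1 : ∀ r, mulE k R (E₂ r) = r := by
    intro r
    rw [hE₂app, mulE_tmul, unop_op, one_mul]
  have hE₂b : ∀ ν, E₂ (bR ν) = bE (ι₂ ν) := by
    intro ν
    rw [hE₂app, hbE, hbR]
    show (1 : R) ⊗ₜ[k] op (stdMon x ν)
      = stdMon x (0 : Fin n → ℕ) ⊗ₜ[k] op (stdMon x (expRev (expRev ν)))
    rw [stdMon_zero, expRev_rev]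
  rcases hle2 with h2 | h2 | h2 | h2
  · subst h2
    exact main_step x hadm bR bE hbE hUB _ ι₁ hι₁inj hι₁sum hπι₁ hmt₁ E₁ hE₁1 hE₁b
      (P3_upComp hadm) ordR ordE hord M G hG
  · subst h2
    exact main_step x hadm bR bE hbE hUB _ ι₂ hι₂inj hι₂sum hπι₂ hmt₂ E₂ hE₂1 hE₂b
      (P3_downComp hadm) ordR ordE hord M G hG
  · subst h2
    exact main_step x hadm bR bE hbE hUB _ ι₂ hι₂inj hι₂sum hπι₂ hmt₂ E₂ hE₂1 hE₂b
      (P3_elimUp hadm) ordR ordE hord M G hG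
  · subst h2
    exact main_step x hadm bR bE hbE hUB _ ι₁ hι₁inj hι₁sum hπι₁ hmt₁ E₁ hE₁1 hE₁b
      (P3_elimDown hadm) ordR ordE hord M G hG
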